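/- arXiv:math/0409141 — 4 statements merged into one kernel-verified Lean document; each statement's English description precedes it below -/
import Mathlib

section
/- Let m ≥ 2 and r ≥ 1 be integers. Then there exist infinitely many primes l not dividing m such that r divides the multiplicative order of m modulo l. -/
open Polynomial

/-- Let `m ≥ 2` and `r ≥ 1` be integers. Then there exist infinitely many primes `l`
not dividing `m` such that `r` divides the multiplicative order of `m` modulo `l`. -/
theorem stmt0 (m r : ℕ) (hm : 2 ≤ m) (hr : 1 ≤ r) :
    {l : ℕ | l.Prime ∧ ¬ l ∣ m ∧ r ∣ orderOf (m : ZMod l)}.Infinite := by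
  apply Set.infinite_of_not_bddAbove
  rintro ⟨x, hx⟩
  -- pick a prime q > max(x, r, m)
  obtain ⟨q, hqgt, hq⟩ := Nat.exists_infinite_primes (max (max x r) m + 1)
  have hqx : x < q := lt_of_le_of_lt (le_max_left _ _ |>.trans (le_max_left _ _)) hqgt
  have hqr : r < q := lt_of_le_of_lt (le_max_right _ _ |>.trans (le_max_left _ _)) hqgt
  have hqm : m < q := lt_of_le_of_lt (le_max_right _ _) hqgt
  set n := r * q with hn
  have hn0 : n ≠ 0 := Nat.mul_ne_zero (by omega) hq.pos.ne'
  have hn1 : 1 < n := by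
    have := hq.two_le; calc 1 < q := hq.one_lt
    _ ≤ r * q := Nat.le_mul_of_pos_left _ (by omega)
  -- the cyclotomic value is > 1
  have hgt : 1 < (eval (m : ℤ) (cyclotomic n ℤ)).natAbs := by
    calc 1 ≤ m - 1 := by omega
    _ < (eval (m : ℤ) (cyclotomic n ℤ)).natAbs := by
        have := sub_one_lt_natAbs_cyclotomic_eval hn1 (by omega : m ≠ 1)
        omega
  set p := (eval (m : ℤ) (cyclotomic n ℤ)).natAbs.minFac with hp
  haveI hprime : Fact p.Prime := ⟨Nat.minFac_prime (ne_of_lt hgt).symm⟩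
  have hroot : IsRoot (cyclotomic n (ZMod p)) (Nat.castRingHom (ZMod p) m) := by
    have : ((m : ℤ) : ZMod p) = ↑(Int.castRingHom (ZMod p) m) := by simp
    rw [IsRoot.def, eq_natCast, ← map_cyclotomic_int n (ZMod p), eval_map,
      ← Int.cast_natCast, this, eval₂_hom, Int.coe_castRingHom, ZMod.intCast_zmod_eq_zero_iff_dvd]
    apply Int.dvd_natAbs.1
    exact mod_cast Nat.minFac_dvd (eval (m : ℤ) (cyclotomic n ℤ)).natAbs
  have hpm : ¬ p ∣ m :=
    hprime.1.coprime_iff_not_dvd.mp (coprime_of_root_cyclotomic hn0.bot_lt hroot).symm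
  set k := n.factorization p with hk
  set n' := n / p ^ n.factorization p with hn'
  have hfac : p ^ k * n' = n := Nat.ordProj_mul_ordCompl_eq_self n p
  have hpn' : ¬ p ∣ n' := Nat.not_dvd_ordCompl hprime.1 hn0
  have hn'0 : n' ≠ 0 := (Nat.ordCompl_pos p hn0).ne'
  haveI : NeZero ((n' : ZMod p)) := NeZero.of_not_dvd (ZMod p) hpn'
  rw [← hfac, eq_natCast] at hroot
  have hprim : IsPrimitiveRoot ((m : ZMod p)) n' :=
    isRoot_cyclotomic_prime_pow_mul_iff_of_charP.mp hroot
  have hord : n' = orderOf (m : ZMod p) := hprim.eq_orderOf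
  have hne0 : (m : ZMod p) ≠ 0 := fun h => hpm ((ZMod.natCast_eq_zero_iff m p).mp h)
  have hdvd : orderOf (m : ZMod p) ∣ p - 1 := ZMod.orderOf_dvd_card_sub_one hne0
  suffices h : r ∣ orderOf (m : ZMod p) ∧ x < p by
    have : p ≤ x := hx ⟨hprime.1, hpm, h.1⟩
    omega
  have hn'p : n' ≤ p - 1 := Nat.le_of_dvd (by have := hprime.1.two_le; omega) (hord ▸ hdvd)
  by_cases hpn : p ∣ n
  · rcases (hprime.1.dvd_mul.mp (hn ▸ hpn)) with hpr | hpq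
    · -- p ∣ r : impossible since q ∣ n' but n' < p ≤ r < q
      exfalso
      have hpq : p ≠ q := by
        have : p ≤ r := Nat.le_of_dvd (by omega) hpr
        omega
      have hqn' : q ∣ n' := by
        have hqn : q ∣ n := dvd_mul_left q r
        refine (Nat.Coprime.dvd_of_dvd_mul_left ?_ (hfac ▸ hqn))
        exact Nat.Coprime.pow_right _ ((Nat.coprime_primes hq hprime.1).mpr (Ne.symm hpq))
      have : q ≤ n' := Nat.le_of_dvd (Nat.pos_of_ne_zero hn'0) hqn'
      have : p ≤ r := Nat.le_of_dvd (by omega) hpr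
      omega
    · -- p = q
      have hpq : p = q := ((Nat.prime_dvd_prime_iff_eq hprime.1 hq).mp hpq)
      have hk1 : k = 1 := by
        rw [hk, hpq, hn, Nat.factorization_mul (by omega) hq.pos.ne', Finsupp.add_apply,
          hq.factorization_self, Nat.factorization_eq_zero_of_lt hqr]
      have hrn' : n' = r := by
        have h2 : q * n' = q * r := by
          rw [hk1, pow_one, hpq] at hfac
          rw [hfac, hn, mul_comm]
        exact Nat.eq_of_mul_eq_mul_left hq.pos h2
      exact ⟨hord ▸ hrn' ▸ dvd_refl r, hpq ▸ hqx⟩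
  · -- p ∤ n : n' = n, order = n, p ≥ n + 1 > q > x
    have hk0 : k = 0 := by
      rw [hk, Nat.factorization_eq_zero_iff]
      exact Or.inr (Or.inl hpn)
    have hnn' : n' = n := by rw [← hfac, hk0, pow_zero, one_mul]
    constructor
    · exact hord ▸ hnn' ▸ (⟨q, hn⟩ : r ∣ n)
    · have : n ≤ p - 1 := hnn' ▸ hn'p
      have hq1 : q ≤ n := Nat.le_mul_of_pos_left _ (by omega)
      have := hprime.1.two_le
      omega
end

section
/- Let M be a field, L/M an algebraic extension inside a separable closure of M. Suppose that for every finite Galois extension K/M (inside the separable closure) such that Gal(K/M) admits a faithful irreducible complex linear representation, we have K ⊆ L. Then L contains every finite Galois extension of M, i.e. L is the separable closure of M. -/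
/-!
Let `K/M` be finite Galois with group `G` and let `T = L ∩ K`. An element `g ≠ 1` of `G` acts
nontrivially on the regular representation `ℂ[G]`, hence, by semisimplicity, on some simple
summand `σ`. The quotient `G ⧸ ker σ` inherits from `σ` a faithful irreducible representation, so
the fixed field of `ker σ`, a Galois subextension of `K` with this group, lies in `L`. Hence `g`
does not fix `T`; as `g` was arbitrary, `T = K` by the Galois correspondence. Finally every element
of the separable closure lies in a finite Galois extension of `M`.
-/

open scoped MonoidAlgebra

section

variable {k G H V W : Type*} [CommSemiring k] [Monoid G] [Monoid H]
  [AddCommMonoid V] [Module k V] [AddCommMonoid W] [Module k W]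

def Subrepresentation.compOrderIso (ρ : Representation k G V) {f : H →* G}
    (hf : Function.Surjective f) : Subrepresentation (ρ.comp f) ≃o Subrepresentation ρ where
  toFun p := ⟨p.toSubmodule, fun g v hv => by
    obtain ⟨h, rfl⟩ := hf g
    exact p.apply_mem_toSubmodule h hv⟩
  invFun p := ⟨p.toSubmodule, fun h _ hv => p.apply_mem_toSubmodule (f h) hv⟩
  left_inv _ := rfl
  right_inv _ := rfl
  map_rel_iff' := Iff.rfl

namespace Representation

def conj (ρ : Representation k G V) (e : V ≃ₗ[k] W) : Representation k G W :=
  (e.conjAlgEquiv k).toMonoidHom.comp ρ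

def equivConj (ρ : Representation k G V) (e : V ≃ₗ[k] W) : ρ.Equiv (ρ.conj e) :=
  .mk e fun g => by ext v; simp [conj]

theorem asAlgebraHom_ofModule' (M : Type*) [AddCommMonoid M] [Module k M] [Module k[G] M]
    [IsScalarTower k k[G] M] :
    (ofModule' (k := k) (G := G) M).asAlgebraHom = Algebra.lsmul k k M :=
  (MonoidAlgebra.lift k _ G).apply_symm_apply _

end Representation

end

namespace Representation

variable {k G H V W : Type*} [Field k] [Monoid G] [Monoid H]
  [AddCommGroup V] [Module k V] [AddCommGroup W] [Module k W]

theorem isIrreducible_comp_iff (ρ : Representation k G V) {f : H →* G}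
    (hf : Function.Surjective f) : IsIrreducible (ρ.comp f) ↔ ρ.IsIrreducible :=
  (Subrepresentation.compOrderIso ρ hf).isSimpleOrder_iff

theorem Equiv.isIrreducible {ρ : Representation k G V} {σ : Representation k G W}
    (φ : ρ.Equiv σ) [ρ.IsIrreducible] : σ.IsIrreducible := by
  rw [irreducible_iff_isSimpleModule_asModule] at *
  exact IsSimpleModule.congr <| LinearEquiv.ofBijective
    (IntertwiningMap.equivLinearMapAsModule σ ρ φ.symm.toIntertwiningMap)
    φ.symm.toLinearEquiv.bijective

theorem isIrreducible_ofModule' (M : Type*) [AddCommGroup M] [Module k M] [Module k[G] M]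
    [IsScalarTower k k[G] M] [IsSimpleModule k[G] M] :
    (ofModule' (k := k) (G := G) M).IsIrreducible := by
  rw [irreducible_iff_isSimpleModule_asModule]
  exact IsSimpleModule.congr
    { (ofModule' M).asModuleEquiv with
      map_smul' := fun r x => by
        change (ofModule' M).asModuleEquiv (r • x) = r • (ofModule' M).asModuleEquiv x
        rw [asModuleEquiv_map_smul, asAlgebraHom_ofModule']
        rfl }

end Representation

theorem IsSemisimpleModule.exists_isSimpleModule_smul_ne {R M : Type*} [Ring R] [AddCommGroup M]
    [Module R M] [IsSemisimpleModule R M] {r : R} {m : M} (h : r • m ≠ m) :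
    ∃ S : Submodule R M, IsSimpleModule R S ∧ ∃ x ∈ S, r • x ≠ x := by
  by_contra! hfix
  have hm : m ∈ sSup {S : Submodule R M | IsSimpleModule R S} := by
    rw [IsSemisimpleModule.sSup_simples_eq_top]
    exact Submodule.mem_top
  rw [sSup_eq_iSup'] at hm
  refine h (Submodule.iSup_induction _ (motive := fun y => r • y = y) hm ?_ (smul_zero r) ?_)
  · exact fun S => hfix S.1 S.2
  · intro x y hx hy
    rw [smul_add, hx, hy]

open Representation

def HasFaithfulIrreducibleRep (G : Type*) [Group G] : Prop :=
  ∃ (n : ℕ) (ρ : Representation ℂ G (Fin n → ℂ)),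
    (∀ g, ρ g = LinearMap.id → g = 1) ∧ IsSimpleModule (MonoidAlgebra ℂ G) ρ.asModule

namespace HasFaithfulIrreducibleRep

variable {G H V : Type*} [Group G] [Group H] [AddCommGroup V] [Module ℂ V]

theorem of_faithful [FiniteDimensional ℂ V] (ρ : Representation ℂ G V) [ρ.IsIrreducible]
    (hρ : ∀ g, ρ g = LinearMap.id → g = 1) : HasFaithfulIrreducibleRep G := by
  let e := (Module.finBasis ℂ V).equivFun
  refine ⟨_, ρ.conj e, fun g hg => hρ g ?_, ?_⟩
  · exact (EmbeddingLike.map_eq_one_iff (f := e.conjAlgEquiv ℂ)).mp hg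
  · rw [← irreducible_iff_isSimpleModule_asModule]
    exact (ρ.equivConj e).isIrreducible

theorem of_mulEquiv (e : G ≃* H) (h : HasFaithfulIrreducibleRep H) :
    HasFaithfulIrreducibleRep G := by
  obtain ⟨n, ρ, hfaithful, hsimple⟩ := h
  refine ⟨n, ρ.comp e.toMonoidHom, fun g hg => e.map_eq_one_iff.mp (hfaithful _ hg), ?_⟩
  rw [← irreducible_iff_isSimpleModule_asModule] at hsimple ⊢
  exact (isIrreducible_comp_iff ρ e.surjective).mpr hsimple

theorem quotient_ker [FiniteDimensional ℂ V] (σ : Representation ℂ G V) [σ.IsIrreducible] :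
    HasFaithfulIrreducibleRep (G ⧸ MonoidHom.ker σ) := by
  have : IsTrivial (σ.comp (MonoidHom.ker σ).subtype) := ⟨fun g => g.2⟩
  let ρ := σ.ofQuotient (MonoidHom.ker σ)
  have : ρ.IsIrreducible :=
    (isIrreducible_comp_iff ρ (QuotientGroup.mk'_surjective (MonoidHom.ker σ))).mp ‹_›
  refine of_faithful ρ fun q hq => ?_
  induction q using QuotientGroup.induction_on with
  | H g => exact (QuotientGroup.eq_one_iff g).mpr hq

end HasFaithfulIrreducibleRep

theorem exists_normal_notMem_hasFaithfulIrreducibleRep_quotient {G : Type*} [Group G] [Finite G]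
    {g : G} (hg : g ≠ 1) :
    ∃ (N : Subgroup G) (_ : N.Normal), g ∉ N ∧ HasFaithfulIrreducibleRep (G ⧸ N) := by
  obtain ⟨S, hS, x, hxS, hx⟩ := IsSemisimpleModule.exists_isSimpleModule_smul_ne
    (R := ℂ[G]) (r := MonoidAlgebra.single g 1) (m := (1 : ℂ[G])) (by
      rwa [smul_eq_mul, mul_one, MonoidAlgebra.one_def, Ne,
        MonoidAlgebra.single_left_inj one_ne_zero])
  have : FiniteDimensional ℂ S := Module.Finite.trans ℂ[G] S
  let σ := ofModule' (k := ℂ) (G := G) S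
  have : σ.IsIrreducible := isIrreducible_ofModule' S
  refine ⟨MonoidHom.ker σ, inferInstance, fun hgN => hx ?_, .quotient_ker σ⟩
  exact congr($(LinearMap.ext_iff.mp hgN ⟨x, hxS⟩).1)

namespace IntermediateField

theorem eq_top_of_forall_ne_one_exists_fixedField_le {F E : Type*} [Field F] [Field E]
    [Algebra F E] [FiniteDimensional F E] [IsGalois F E] (T : IntermediateField F E)
    (h : ∀ g : Gal(E/F), g ≠ 1 → ∃ N : Subgroup Gal(E/F), g ∉ N ∧ fixedField N ≤ T) : T = ⊤ := by
  have hfix : fixingSubgroup T = ⊥ := by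
    refine (Subgroup.eq_bot_iff_forall _).mpr fun g hgT => by_contra fun hg => ?_
    obtain ⟨N, hgN, hNT⟩ := h g hg
    exact hgN (fixingSubgroup_fixedField N ▸ fixingSubgroup_le hNT hgT)
  rw [← IsGalois.fixedField_fixingSubgroup T, hfix, fixedField_bot]

theorem le_of_forall_hasFaithfulIrreducibleRep_le {M Ω : Type*} [Field M] [Field Ω]
    [Algebra M Ω] {L : IntermediateField M Ω}
    (H : ∀ K : IntermediateField M Ω, FiniteDimensional M K → IsGalois M K →
      HasFaithfulIrreducibleRep Gal(K/M) → K ≤ L)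
    (K : IntermediateField M Ω) [FiniteDimensional M K] [IsGalois M K] : K ≤ L := by
  suffices L.comap K.val = ⊤ from fun x hx => (this ▸ mem_top : (⟨x, hx⟩ : K) ∈ L.comap K.val)
  refine eq_top_of_forall_ne_one_exists_fixedField_le _ fun g hg => ?_
  obtain ⟨N, _, hgN, hN⟩ := exists_normal_notMem_hasFaithfulIrreducibleRep_quotient hg
  refine ⟨N, hgN, map_le_iff_le_comap.mp ?_⟩
  let e := equivMap (fixedField N) K.val
  have : FiniteDimensional M (map K.val (fixedField N)) := e.toLinearEquiv.finiteDimensional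
  have : IsGalois M (map K.val (fixedField N)) := .of_algEquiv e
  exact H _ ‹_› ‹_› <| hN.of_mulEquiv <|
    (AlgEquiv.autCongr e.symm).trans (IsGalois.normalAutEquivQuotient N).symm

end IntermediateField

/-- Let `M` be a field, `Ω` a separable closure of `M`, `L` an intermediate field of `Ω/M`.
If every finite Galois extension `K/M` (inside `Ω`) whose Galois group admits a faithful
irreducible complex linear representation satisfies `K ⊆ L`, then `L` contains every finite
Galois extension of `M`, i.e. `L = Ω` is the separable closure of `M`. -/
theorem stmt4 (M : Type) [Field M] (Ω : Type) [Field Ω] [Algebra M Ω] [IsSepClosure M Ω]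
    (L : IntermediateField M Ω)
    (H : ∀ K : IntermediateField M Ω, FiniteDimensional M K → IsGalois M K →
      (∃ (n : ℕ) (ρ : Representation ℂ (↥K ≃ₐ[M] ↥K) (Fin n → ℂ)),
        (∀ g, ρ g = LinearMap.id → g = 1) ∧
        IsSimpleModule (MonoidAlgebra ℂ (↥K ≃ₐ[M] ↥K)) ρ.asModule) → K ≤ L) :
    L = ⊤ := by
  refine eq_top_iff.mpr fun x _ => ?_
  exact IntermediateField.le_of_forall_hasFaithfulIrreducibleRep_le H
    (FiniteGaloisIntermediateField.adjoin M {x})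
    (FiniteGaloisIntermediateField.subset_adjoin M {x} (Set.mem_singleton x))
end

section
/- Let q ≥ 2 be an integer and let a ∈ ẑ (the profinite completion of ℤ) be such that q^a = 1 in ∏_{l prime, l ∤ q} ℤ_lˣ (i.e., for every prime l not dividing q, the image of a in ℤ_l acts trivially by exponentiation on ℤ_l(1)). Then a = 0. -/
/-!
If `q ^ a = 1` in `ℤ_lˣ` for a prime `l ∤ q`, then, modulo `l ^ k`, the order of `q` divides the
image of `a` in `ℤ/φ(l ^ k)`; so `a` vanishes modulo every order of `q` modulo a prime power
coprime to `q`. These orders are divisible by every prime power `p ^ e`, which forces `a = 0`.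
If `p ∤ q`, take the order of `q` modulo `p ^ k` for `k` large: its `p`-part grows without bound.
If `p ∣ q`, every prime factor `l` of `Φ_{p^e}(q)` is prime to `q`, hence to `p`, so `q` has
order exactly `p ^ e` modulo `l`.
-/

open Polynomial

def IsCompatibleFamily (a : ∀ n : ℕ, ZMod n) : Prop :=
  ∀ m n : ℕ, 0 < m → ∀ h : m ∣ n, ZMod.castHom h (ZMod m) (a n) = a m

theorem natCast_pow_eq_one_iff_modEq {x m N : ℕ} :
    (x : ZMod N) ^ m = 1 ↔ x ^ m ≡ 1 [MOD N] := by
  rw [← ZMod.natCast_eq_natCast_iff]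
  push_cast
  rfl

theorem lt_pow_of_natCast_pow_eq_one {x m N : ℕ} (hx : 2 ≤ x) (hm : m ≠ 0)
    (h : (x : ZMod N) ^ m = 1) : N < x ^ m := by
  have hxm : 2 ≤ x ^ m := hx.trans (Nat.le_self_pow hm x)
  have hdvd : N ∣ x ^ m - 1 :=
    (Nat.modEq_iff_dvd' (by omega)).1 (natCast_pow_eq_one_iff_modEq.1 h).symm
  have := Nat.le_of_dvd (by omega) hdvd
  omega

theorem orderOf_natCast_dvd_totient {q N : ℕ} (hqN : q.Coprime N) :
    orderOf (q : ZMod N) ∣ N.totient :=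
  orderOf_dvd_of_pow_eq_one (natCast_pow_eq_one_iff_modEq.2 (Nat.ModEq.pow_totient hqN))

theorem exists_prime_orderOf_natCast_eq {q n : ℕ} (hq : 2 ≤ q) (hn : 1 < n)
    (hnq : ∀ p, p.Prime → p ∣ n → p ∣ q) :
    ∃ l, l.Prime ∧ ¬ l ∣ q ∧ orderOf (q : ZMod l) = n := by
  set c := ((cyclotomic n ℤ).eval (q : ℤ)).natAbs
  have hc : 1 < c := by
    have := sub_one_lt_natAbs_cyclotomic_eval hn (q := q) (by omega)
    omega
  set l := c.minFac
  have hl : l.Prime := Nat.minFac_prime hc.ne'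
  have : Fact l.Prime := ⟨hl⟩
  have hroot : IsRoot (cyclotomic n (ZMod l)) (Nat.castRingHom (ZMod l) q) := by
    rw [IsRoot.def, ← map_cyclotomic_int, Nat.coe_castRingHom, ← Int.cast_natCast,
      eval_intCast_map, Int.coe_castRingHom, ZMod.intCast_zmod_eq_zero_iff_dvd]
    exact Int.dvd_natAbs.1 (mod_cast Nat.minFac_dvd c)
  have hlq : ¬ l ∣ q :=
    hl.coprime_iff_not_dvd.1 (coprime_of_root_cyclotomic (by omega) hroot).symm
  have : NeZero (n : ZMod l) :=
    ⟨fun h => hlq (hnq l hl ((ZMod.natCast_eq_zero_iff n l).1 h))⟩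
  exact ⟨l, hl, hlq, ((isRoot_cyclotomic_iff.1 hroot).eq_orderOf).symm⟩

theorem exists_pow_dvd_orderOf_natCast_prime_pow {q p : ℕ} (hq : 2 ≤ q) (hp : p.Prime)
    (hpq : ¬ p ∣ q) (e : ℕ) : ∃ k, 0 < k ∧ p ^ e ∣ orderOf (q : ZMod (p ^ k)) := by
  set k := q ^ ((p - 1) * p ^ e)
  have hk : 0 < k := pow_pos (by omega) _
  refine ⟨k, hk, ?_⟩
  -- The order of `q ^ (p - 1)` modulo `p ^ k` is some `p ^ j`; if `j < e`, then
  -- `p ^ k ∣ q ^ ((p - 1) * p ^ j) - 1` with `0 < q ^ ((p - 1) * p ^ j) - 1 < k < p ^ k`.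
  have hx : ((q : ZMod (p ^ k)) ^ (p - 1)) ^ p ^ (k - 1) = 1 := by
    rw [← pow_mul, mul_comm, ← Nat.totient_prime_pow hp hk]
    exact natCast_pow_eq_one_iff_modEq.2
      (Nat.ModEq.pow_totient ((hp.coprime_iff_not_dvd.2 hpq).symm.pow_right k))
  obtain ⟨j, -, hj⟩ := (Nat.dvd_prime_pow hp).1 (orderOf_dvd_of_pow_eq_one hx)
  refine dvd_trans ?_ (hj ▸ orderOf_pow_dvd (p - 1))
  refine pow_dvd_pow p (not_lt.1 fun hje => ?_)
  have hlt : p ^ k < q ^ ((p - 1) * p ^ j) := by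
    refine lt_pow_of_natCast_pow_eq_one hq (mul_ne_zero (by have := hp.two_le; omega)
      (pow_ne_zero _ hp.ne_zero)) ?_
    rw [pow_mul, ← hj, pow_orderOf_eq_one]
  have : q ^ ((p - 1) * p ^ j) ≤ k :=
    Nat.pow_le_pow_right (by omega) (Nat.mul_le_mul_left _ (Nat.pow_le_pow_right hp.pos hje.le))
  exact absurd (hlt.trans_le this) (Nat.lt_pow_self hp.one_lt).asymm

theorem exists_prime_pow_dvd_orderOf_natCast {q p e : ℕ} (hq : 2 ≤ q) (hp : p.Prime)
    (he : 0 < e) :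
    ∃ l k, l.Prime ∧ ¬ l ∣ q ∧ 0 < k ∧ p ^ e ∣ orderOf (q : ZMod (l ^ k)) := by
  by_cases hpq : p ∣ q
  · have hpe : 1 < p ^ e := Nat.one_lt_pow he.ne' hp.one_lt
    obtain ⟨l, hl, hlq, hord⟩ := exists_prime_orderOf_natCast_eq hq hpe
      fun r hr hrp => (Nat.prime_dvd_prime_iff_eq hr hp).1 (hr.dvd_of_dvd_pow hrp) ▸ hpq
    exact ⟨l, 1, hl, hlq, one_pos, by rw [pow_one, hord]⟩
  · obtain ⟨k, hk, hdvd⟩ := exists_pow_dvd_orderOf_natCast_prime_pow hq hp hpq e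
    exact ⟨p, k, hp, hpq, hk, hdvd⟩

namespace IsCompatibleFamily

variable {a : ∀ n : ℕ, ZMod n}

theorem eq_zero_of_dvd (ha : IsCompatibleFamily a) {m n : ℕ} (hm : 0 < m) (hmn : m ∣ n)
    (hn : a n = 0) : a m = 0 := by
  rw [← ha m n hm hmn, hn, map_zero]

theorem eq_zero_of_forall_prime_pow (ha : IsCompatibleFamily a)
    (h : ∀ p k, p.Prime → 0 < k → a (p ^ k) = 0) {n : ℕ} (hn : 0 < n) : a n = 0 := by
  have : NeZero n := ⟨hn.ne'⟩
  rw [← ZMod.natCast_zmod_val (a n), ZMod.natCast_eq_zero_iff]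
  refine (Nat.dvd_iff_prime_pow_dvd_dvd _ _).2 fun p k hp hpk => ?_
  rcases Nat.eq_zero_or_pos k with rfl | hk
  · exact (pow_zero p).symm ▸ one_dvd _
  rw [← ZMod.natCast_eq_zero_iff, ← ZMod.cast_eq_val, ← ZMod.castHom_apply (h := hpk),
    ha _ _ (pow_pos hp.pos k) hpk, h p k hp hk]

theorem apply_orderOf_eq_zero (ha : IsCompatibleFamily a) {q N : ℕ} (hN : 0 < N)
    (hqN : q.Coprime N)
    (H : ∀ b : ℕ, (b : ZMod N.totient) = a N.totient → q ^ b ≡ 1 [MOD N]) :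
    a (orderOf (q : ZMod N)) = 0 := by
  have : NeZero N.totient := ⟨(Nat.totient_pos.2 hN).ne'⟩
  set b := (a N.totient).val
  have hb : (b : ZMod N.totient) = a N.totient := ZMod.natCast_zmod_val _
  have hdvd := orderOf_natCast_dvd_totient hqN
  have hord : orderOf (q : ZMod N) ∣ b :=
    orderOf_dvd_of_pow_eq_one (natCast_pow_eq_one_iff_modEq.2 (H b hb))
  rw [← ha _ _ (Nat.pos_of_dvd_of_pos hdvd (Nat.totient_pos.2 hN)) hdvd, ← hb, map_natCast,
    ZMod.natCast_eq_zero_iff]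
  exact hord

end IsCompatibleFamily

/-- Let `q ≥ 2` and let `a ∈ ẑ` (the profinite completion of `ℤ`, realized as a compatible
system `(a n)_n` with `a n ∈ ℤ/nℤ`) be such that `q ^ a = 1` in `∏_{l prime, l ∤ q} ℤ_lˣ`
(i.e. for every prime `l ∤ q` and every `k ≥ 1`, `q ^ b ≡ 1 [MOD l^k]` whenever the integer
`b` is congruent to `a` modulo `φ(l^k)`, so that the image of `a` in `ℤ_l` acts trivially by
exponentiation on `ℤ_l(1)`). Then `a = 0`. -/
theorem stmt6 (q : ℕ) (hq : 2 ≤ q)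
    (a : ∀ n : ℕ, ZMod n)
    (ha : ∀ m n : ℕ, 0 < m → ∀ h : m ∣ n, ZMod.castHom h (ZMod m) (a n) = a m)
    (H : ∀ l : ℕ, l.Prime → ¬ l ∣ q → ∀ k : ℕ, 0 < k → ∀ b : ℕ,
      (b : ZMod ((l ^ k).totient)) = a ((l ^ k).totient) → q ^ b ≡ 1 [MOD l ^ k]) :
    ∀ n : ℕ, 0 < n → a n = 0 := by
  have ha : IsCompatibleFamily a := ha
  refine fun n hn => ha.eq_zero_of_forall_prime_pow (fun p e hp he => ?_) hn
  obtain ⟨l, k, hl, hlq, hk, hdvd⟩ := exists_prime_pow_dvd_orderOf_natCast hq hp he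
  have hqlk : q.Coprime (l ^ k) := ((hl.coprime_iff_not_dvd.2 hlq).symm).pow_right k
  exact ha.eq_zero_of_dvd (pow_pos hp.pos e) hdvd
    (ha.apply_orderOf_eq_zero (pow_pos hl.pos k) hqlk (H l hl hlq k hk))
end

section
/- Let E be a number field, S a set of places of E, u ∈ S a place, E_S a maximal algebraic extension of E unramified outside S, and φ : E_S → \bar{E_u} an E-embedding. Then φ(E_S) is dense in \bar{E_u} if and only if the induced map Gal(\bar{E_u}/E_u) → Gal(E_S/E) is injective. -/
/-!
Every `σ ∈ Gal(Ω/E_u)` is an isometry of `Ω`: on the finite extension `E_u(z)` the map `σ` is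
`E_u`-linear, hence bounded since `E_u` is complete, and power-multiplicativity of the absolute
value turns `‖σ (z ^ n)‖ ≤ C ‖z‖ ^ n` for all `n` into `‖σ z‖ ≤ ‖z‖`. So an automorphism fixing the
dense set `φ(E_S)` is the identity. Conversely, the closure `M` of `φ(E_S)` is a field containing
`E_u`, because `E` is dense in `E_u`. As `Ω` is algebraically closed of characteristic zero, it is
Galois over `M`, so each element of `Ω` outside `M` is moved by some automorphism over `M`; such an
automorphism fixes `φ(E_S)` and is not the identity.
-/

open NumberField

/-- A (finite) extension `L` of a number field `E` is unramified outside a set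
`S = Sf ∪ Sinf` of places of `E` (`Sf` finite places, given by maximal ideals of `𝓞 E`,
and `Sinf` infinite places): every maximal ideal of `𝓞 L` lying over a maximal ideal
`𝔭 ∉ Sf` has ramification index `1`, and every infinite place of `L` lying over an
infinite place not in `Sinf` is unramified. -/
def UnramifiedOutside (E : Type) [Field E] [NumberField E]
    (Sf : Set (Ideal (𝓞 E))) (Sinf : Set (InfinitePlace E))
    (L : Type) [Field L] [Algebra E L] : Prop :=
  (∀ 𝔭 : Ideal (𝓞 E), 𝔭.IsMaximal → 𝔭 ∉ Sf → ∀ 𝔓 : Ideal (𝓞 L), 𝔓.IsMaximal →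
      Ideal.comap (algebraMap (𝓞 E) (𝓞 L)) 𝔓 = 𝔭 →
      Ideal.ramificationIdx' 𝔭 𝔓 = 1) ∧
  (∀ w : InfinitePlace L, w.comap (algebraMap E L) ∉ Sinf → w.IsUnramified E)

/-- `E_S`: the maximal algebraic extension of `E` unramified outside `S`, realized inside a
fixed algebraic closure of `E` as the compositum of all finite subextensions unramified
outside `S`. -/
noncomputable def maxUnramifiedOutside (E : Type) [Field E] [NumberField E]
    (Sf : Set (Ideal (𝓞 E))) (Sinf : Set (InfinitePlace E)) :
    IntermediateField E (AlgebraicClosure E) :=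
  ⨆ L : {L : IntermediateField E (AlgebraicClosure E) //
      FiniteDimensional E L ∧ UnramifiedOutside E Sf Sinf L},
    (L : IntermediateField E (AlgebraicClosure E))

open IntermediateField

theorem completeSpace_of_forall_norm_cauchy {F : Type*} [SeminormedAddCommGroup F]
    (h : ∀ f : ℕ → F, (∀ ε : ℝ, 0 < ε → ∃ N, ∀ m n : ℕ, N ≤ m → N ≤ n → ‖f m - f n‖ < ε) →
      ∃ x : F, ∀ ε : ℝ, 0 < ε → ∃ N, ∀ n : ℕ, N ≤ n → ‖f n - x‖ < ε) :
    CompleteSpace F := by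
  refine Metric.complete_of_cauchySeq_tendsto fun f hf => ?_
  obtain ⟨x, hx⟩ := h f fun ε hε => by
    obtain ⟨N, hN⟩ := Metric.cauchySeq_iff.1 hf ε hε
    exact ⟨N, fun m n hm hn => dist_eq_norm (f m) (f n) ▸ hN m hm n hn⟩
  exact ⟨x, Metric.tendsto_atTop.2 fun ε hε => (hx ε hε).imp fun N hN n hn =>
    dist_eq_norm (f n) x ▸ hN n hn⟩

section
variable {E F : Type*} [Field E] [Field F] [Algebra E F] {w : AbsoluteValue F ℝ}

theorem AbsoluteValue.isNontrivial_of_finitePlace [NumberField E] {𝔭 : Ideal (𝓞 E)}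
    (h𝔭 : 𝔭.IsMaximal) (hw : ∀ x ∈ 𝔭, w (algebraMap E F x) < 1) : w.IsNontrivial := by
  obtain ⟨ξ, hξ𝔭, hξ⟩ := Submodule.exists_mem_ne_zero_of_ne_bot <|
    Ring.ne_bot_of_isMaximal_of_not_isField h𝔭 (RingOfIntegers.not_isField E)
  exact ⟨algebraMap E F ξ, by simpa using hξ, (hw ξ hξ𝔭).ne⟩

theorem AbsoluteValue.isNontrivial_of_infinitePlace {v : InfinitePlace E}
    (hw : ∀ x : E, w (algebraMap E F x) = v x) : w.IsNontrivial := by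
  obtain ⟨x, hx, hvx⟩ := v.isNontrivial
  exact ⟨algebraMap E F x, by simpa using hx, hw x ▸ hvx⟩

end

section
variable {K Ω : Type*} [NontriviallyNormedField K] [CompleteSpace K] [NormedField Ω]
  [NormedAlgebra K Ω]

theorem AlgEquiv.norm_apply_le_of_isIntegral (σ : Ω ≃ₐ[K] Ω) {z : Ω} (hz : IsIntegral K z) :
    ‖σ z‖ ≤ ‖z‖ := by
  let L := K⟮z⟯
  have : FiniteDimensional K L := IntermediateField.adjoin.finiteDimensional hz
  let f : L →ₐ[K] Ω := (σ : Ω →ₐ[K] Ω).comp L.val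
  let g : L →L[K] Ω := ⟨f.toLinearMap, f.toLinearMap.continuous_of_finiteDimensional⟩
  have hbounded : (f : L →+* Ω).IsBounded :=
    ⟨‖g‖ + 1, by positivity, fun x => (g.le_opNorm x).trans (by gcongr; linarith)⟩
  exact contraction_of_isPowMul (fun x n _ => norm_pow x n) hbounded
    ⟨z, IntermediateField.mem_adjoin_simple_self K z⟩

variable [Algebra.IsAlgebraic K Ω]

theorem AlgEquiv.norm_apply (σ : Ω ≃ₐ[K] Ω) (z : Ω) : ‖σ z‖ = ‖z‖ := by
  refine le_antisymm (σ.norm_apply_le_of_isIntegral (Algebra.IsIntegral.isIntegral z)) ?_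
  calc ‖z‖ = ‖σ.symm (σ z)‖ := by rw [σ.symm_apply_apply]
    _ ≤ ‖σ z‖ := σ.symm.norm_apply_le_of_isIntegral (Algebra.IsIntegral.isIntegral _)

theorem AlgEquiv.isometry (σ : Ω ≃ₐ[K] Ω) : Isometry σ :=
  AddMonoidHomClass.isometry_of_norm σ σ.norm_apply

theorem AlgEquiv.apply_eq_self_of_dense (σ : Ω ≃ₐ[K] Ω) {s : Set Ω}
    (hs : Dense s) (hσ : Set.EqOn σ id s) (x : Ω) : σ x = x :=
  congrFun (Continuous.ext_on hs σ.isometry.continuous continuous_id hσ) x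

end

theorem IntermediateField.eq_top_of_fixingSubgroup_eq_bot {K Ω : Type*} [Field K] [CharZero K]
    [Field Ω] [Algebra K Ω] [IsAlgClosure K Ω] {M : IntermediateField K Ω}
    (hM : M.fixingSubgroup = ⊥) : M = ⊤ := by
  refine eq_top_iff.2 fun x _ => ?_
  have : x ∈ (⊥ : IntermediateField M Ω) := (InfiniteGalois.mem_bot_iff_fixed x).2 fun τ => by
    have : τ.restrictScalars K ∈ M.fixingSubgroup := fun m => τ.commutes m
    rw [hM, Subgroup.mem_bot] at this
    exact DFunLike.congr_fun this x
  obtain ⟨m, rfl⟩ := IntermediateField.mem_bot.1 this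
  exact m.2

theorem denseRange_iff_forall_algEquiv_fixing_range {K Ω A : Type*} [NontriviallyNormedField K]
    [CompleteSpace K] [CharZero K] [NormedField Ω] [NormedAlgebra K Ω] [IsAlgClosure K Ω]
    [Field A] (φ : A →+* Ω)
    (hK : Set.range (algebraMap K Ω) ⊆ closure (Set.range φ)) :
    DenseRange φ ↔ ∀ σ : Ω ≃ₐ[K] Ω, (∀ y, σ (φ y) = φ y) → ∀ x, σ x = x := by
  refine ⟨fun hφ σ hσ => σ.apply_eq_self_of_dense hφ (Set.forall_mem_range.2 hσ), fun h => ?_⟩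
  let M : IntermediateField K Ω :=
    φ.fieldRange.topologicalClosure.toIntermediateField fun k => hK ⟨k, rfl⟩
  have hM : M.fixingSubgroup = ⊥ := by
    refine (Subgroup.eq_bot_iff_forall _).2 fun σ hσ => AlgEquiv.ext <|
      h σ fun y => hσ ⟨φ y, φ.fieldRange.le_topologicalClosure ⟨y, rfl⟩⟩
  rw [denseRange_iff_closure_range, ← φ.coe_fieldRange]
  exact congrArg SetLike.coe (IntermediateField.eq_top_of_fixingSubgroup_eq_bot hM)

/-- Let `E` be a number field, `S` a set of places of `E`, `u ∈ S` a place, `E_S` a maximal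
algebraic extension of `E` unramified outside `S`, and `φ : E_S → \bar{E_u}` an
`E`-embedding, where `E_u` is the completion of `E` at `u` (a field `Eu` with an absolute
value `w` extending the place `u`, in which `E` is dense and which is complete) and
`\bar{E_u} = Ω` is an algebraic closure of `E_u`, equipped with the absolute value `W`
extending `w`.  Then `φ(E_S)` is dense in `\bar{E_u}` if and only if the induced map
`Gal(\bar{E_u}/E_u) → Gal(E_S/E)`, `σ ↦ σ ∘ φ`, is injective (equivalently, has trivial
kernel: any `σ` fixing `φ(E_S)` pointwise is the identity). -/
theorem stmt9
    (E : Type) [Field E] [NumberField E]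
    (Sf : Set (Ideal (𝓞 E))) (Sinf : Set (InfinitePlace E))
    (Eu : Type) [Field Eu] [Algebra E Eu]
    (w : AbsoluteValue Eu ℝ)
    -- the place of `E` induced by `w` is a member `u` of `S`
    (hu : (∃ 𝔭 ∈ Sf, 𝔭.IsMaximal ∧ ∀ x : 𝓞 E,
            w (algebraMap E Eu (x : E)) ≤ 1 ∧ (w (algebraMap E Eu (x : E)) < 1 ↔ x ∈ 𝔭))
        ∨ (∃ v ∈ Sinf, ∀ x : E, w (algebraMap E Eu x) = v x))
    -- `Eu` is the completion: `E` is dense and `Eu` is complete with respect to `w`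
    (hdense : ∀ x : Eu, ∀ ε : ℝ, 0 < ε → ∃ y : E, w (x - algebraMap E Eu y) < ε)
    (hcomplete : ∀ f : ℕ → Eu,
      (∀ ε : ℝ, 0 < ε → ∃ N, ∀ m n : ℕ, N ≤ m → N ≤ n → w (f m - f n) < ε) →
      ∃ x : Eu, ∀ ε : ℝ, 0 < ε → ∃ N, ∀ n : ℕ, N ≤ n → w (f n - x) < ε)
    (Ω : Type) [Field Ω] [Algebra Eu Ω] [IsAlgClosure Eu Ω]
    [Algebra E Ω] [IsScalarTower E Eu Ω]
    (W : AbsoluteValue Ω ℝ) (hW : ∀ x : Eu, W (algebraMap Eu Ω x) = w x)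
    (φ : ↥(maxUnramifiedOutside E Sf Sinf) →ₐ[E] Ω) :
    (∀ x : Ω, ∀ ε : ℝ, 0 < ε → ∃ y, W (x - φ y) < ε) ↔
      (∀ σ : Ω ≃ₐ[Eu] Ω, (∀ y, σ (φ y) = φ y) → ∀ x, σ x = x) := by
  have hw : w.IsNontrivial := by
    rcases hu with ⟨𝔭, -, h𝔭, hw⟩ | ⟨v, -, hw⟩
    · exact w.isNontrivial_of_finitePlace h𝔭 fun x hx => (hw x).2.2 hx
    · exact w.isNontrivial_of_infinitePlace hw
  let : NontriviallyNormedField Eu := { w.toNormedField with non_trivial := hw.exists_abv_gt_one }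
  have : CompleteSpace Eu := completeSpace_of_forall_norm_cauchy hcomplete
  have : CharZero Eu := charZero_of_injective_algebraMap (algebraMap E Eu).injective
  let : NormedField Ω := W.toNormedField
  let : NormedAlgebra Eu Ω :=
    { norm_smul_le c x := by rw [Algebra.smul_def, norm_mul]; exact (congrArg (· * ‖x‖) (hW c)).le }
  have hE : DenseRange (algebraMap E Eu) := Metric.denseRange_iff.2 fun x ε hε =>
    (hdense x ε hε).imp fun _ hy => (dist_eq_norm _ _).trans_lt hy
  have hEu : Set.range (algebraMap Eu Ω) ⊆ closure (Set.range φ.toRingHom) := by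
    refine ((algebraMap_isometry Eu Ω).continuous.range_subset_closure_image_dense hE).trans ?_
    rw [← Set.range_comp, ← RingHom.coe_comp, ← IsScalarTower.algebraMap_eq]
    exact closure_mono fun _ ⟨x, hx⟩ => ⟨algebraMap E _ x, hx ▸ φ.commutes x⟩
  have hφ := denseRange_iff_forall_algEquiv_fixing_range φ.toRingHom hEu
  simp only [Metric.denseRange_iff, dist_eq_norm] at hφ
  exact hφ
end
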